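/- Let G be a finite weighted planar graph with vertices a, b, c, d appearing in that cyclic order on a single face. Then M(G∖{b})·M(G∖{a,c,d}) + M(G∖{d})·M(G∖{a,b,c}) = M(G∖{a})·M(G∖{b,c,d}) + M(G∖{a,b,d})·M(G∖{c}), where M(H) denotes the total weight of perfect matchings of H. -/

import Mathlib

open scoped Classical

variable {V : Type*} [Fintype V] [DecidableEq V] {R : Type*} [CommRing R]

/-- `M` is a matching of the induced subgraph of `G` on the vertex set `A`:
a set of edges of `G` contained in `A` that are pairwise vertex-disjoint. -/
def IsMatchingOn (G : SimpleGraph V) (A : Finset V) (M : Finset (Sym2 V)) : Prop :=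
  (∀ e ∈ M, e ∈ G.edgeSet) ∧ (∀ e ∈ M, ∀ v ∈ e, v ∈ A) ∧
  (∀ e ∈ M, ∀ f ∈ M, e ≠ f → ∀ v : V, v ∈ e → v ∉ f)

/-- `Mf G w S A` is the total weight (weight of a matching = product of its edge weights)
of all matchings of the induced subgraph of `G` on `A` in which every vertex of `A` not
belonging to the distinguished ("free") set `S` is matched. -/
noncomputable def Mf (G : SimpleGraph V) (w : Sym2 V → R) (S A : Finset V) : R :=
  ∑ M ∈ Finset.univ.filter
      (fun M : Finset (Sym2 V) =>
        IsMatchingOn G A M ∧ ∀ v ∈ A, v ∉ S → ∃ e ∈ M, v ∈ e),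
    ∏ e ∈ M, w e

/-- Two walks are (vertex-)disjoint. -/
def WalkDisjoint {G : SimpleGraph V} {u v u' v' : V} (P : G.Walk u v) (Q : G.Walk u' v') : Prop :=
  ∀ z : V, z ∈ P.support → z ∉ Q.support

/-- `S` is `a,c`-separated (relative to `b` and `d`): there is no triple of mutually
vertex-disjoint paths `P₁ : a — c`, `P₂ : b — s`, `P₃ : d — t` with `s ≠ t` in `S`. -/
def Separated (G : SimpleGraph V) (S : Finset V) (a b c d : V) : Prop :=
  ¬ ∃ (s t : V) (P₁ : G.Walk a c) (P₂ : G.Walk b s) (P₃ : G.Walk d t),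
      s ∈ S ∧ t ∈ S ∧ s ≠ t ∧ P₁.IsPath ∧ P₂.IsPath ∧ P₃.IsPath ∧
      WalkDisjoint P₁ P₂ ∧ WalkDisjoint P₁ P₃ ∧ WalkDisjoint P₂ P₃

/-- `L` is the boundary cycle of a face of a planar embedding of `G`, on which the four
vertices `a`, `b`, `c`, `d` occur in this cyclic order.  Planarity of the embedding is
encoded through its characteristic combinatorial consequence: two pairs of vertices that
interleave on the boundary cycle of a face can never be joined by two vertex-disjoint
paths of `G`. -/
structure FaceConfig (G : SimpleGraph V) (L : List V) (a b c d : V) : Prop where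
  nodup : L.Nodup
  cyclic : ∃ L' : List V, L ~r L' ∧ ∃ i j k l : Fin L'.length,
      i < j ∧ j < k ∧ k < l ∧ L'.get i = a ∧ L'.get j = b ∧ L'.get k = c ∧ L'.get l = d
  noncrossing : ∀ L' : List V, L ~r L' → ∀ i j k l : Fin L'.length, i < j → j < k → k < l →
      ¬ ∃ (P : G.Walk (L'.get i) (L'.get k)) (Q : G.Walk (L'.get j) (L'.get l)),
          P.IsPath ∧ Q.IsPath ∧ WalkDisjoint P Q

/-!
Both sides expand into sums over pairs `(M₁, M₂)` of perfect matchings. In the symmetric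
difference `M₁ ∆ M₂` every vertex has degree at most two, and the vertices of odd degree are
exactly `a`, `b`, `c`, `d`, so the component of `a` is a path from `a` to one of `b`, `c`, `d`.
It cannot end at `c`: the component of `b` would then be a path to `d`, disjoint from the first,
and the two paths would join the interleaved pairs of the face. Exchanging `M₁` and `M₂` along
this path is a weight-preserving involution that turns the pairs counted on the left into those
counted on the right and vice versa.
-/

open Finset SimpleGraph
open scoped symmDiff

variable {W : Type*}

theorem Finset.prod_symmDiff_mul_prod_symmDiff {α β : Type*} [DecidableEq α] [CommMonoid β]
    {s t u : Finset α} (hu : u ⊆ s ∆ t) (f : α → β) :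
    (∏ x ∈ s ∆ u, f x) * ∏ x ∈ t ∆ u, f x = (∏ x ∈ s, f x) * ∏ x ∈ t, f x := by
  rw [← prod_union_inter, ← prod_union_inter (s₁ := s)]
  congr 2 <;> ext x <;> have := @hu x <;> simp only [mem_union, mem_inter, mem_symmDiff] at * <;>
    tauto

theorem Finset.card_symmDiff_add_two_mul_card_inter {α : Type*} [DecidableEq α] (s t : Finset α) :
    #(s ∆ t) + 2 * #(s ∩ t) = #s + #t := by
  rw [symmDiff_eq_sup_sdiff_inf, sup_eq_union, inf_eq_inter,
    card_sdiff_of_subset inter_subset_union, ← card_union_add_card_inter s t]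
  have := card_le_card (inter_subset_union (s := s) (t := t))
  omega

/-- A connected graph on `n` vertices has at least `n - 1` edges, so by the degree sum it has
room for at most two vertices of degree one when all degrees are at most two. -/
theorem SimpleGraph.Connected.card_odd_degree_le_two [Fintype W] {H : SimpleGraph W}
    [DecidableRel H.Adj] (hconn : H.Connected) (hdeg : ∀ v, H.degree v ≤ 2) :
    #({v | Odd (H.degree v)} : Finset W) ≤ 2 := by
  have hcard := hconn.card_vert_le_card_edgeSet_add_one
  rw [Nat.card_eq_fintype_card, Nat.card_eq_fintype_card, ← edgeFinset_card] at hcard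
  have hle : ∑ v, (H.degree v + if Odd (H.degree v) then 1 else 0) ≤ ∑ _v : W, 2 := by
    refine sum_le_sum fun v _ => ?_
    have := hdeg v
    split_ifs with h
    · obtain ⟨k, hk⟩ := h
      omega
    · omega
  rw [sum_add_distrib, ← card_filter, H.sum_degrees_eq_twice_card_edges, sum_const, card_univ,
    smul_eq_mul] at hle
  omega

theorem SimpleGraph.exists_other_odd_degree_reachable [Fintype W] [DecidableEq W]
    {H : SimpleGraph W} [DecidableRel H.Adj] (hdeg : ∀ v, H.degree v ≤ 2) {a : W}
    (ha : Odd (H.degree a)) :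
    ∃ x, x ≠ a ∧ H.Reachable a x ∧ Odd (H.degree x) ∧
      ∀ y, H.Reachable a y → Odd (H.degree y) → y = a ∨ y = x := by
  set S := (H.connectedComponentMk a).supp
  have hmem : ∀ {y}, y ∈ S ↔ H.Reachable a y := by
    intro y
    rw [ConnectedComponent.mem_supp_iff, ConnectedComponent.eq]
    exact ⟨Reachable.symm, Reachable.symm⟩
  have hdegS : ∀ u : S, (H.induce S).degree u = H.degree u := fun u =>
    degree_induce_of_neighborSet_subset fun _ hw =>
      ConnectedComponent.mem_supp_of_adj_mem_supp _ u.2 hw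
  have hconn : (H.induce S).Connected := (H.connectedComponentMk a).connected_toSimpleGraph
  have hodd_le := hconn.card_odd_degree_le_two fun u => hdegS u ▸ hdeg u
  set O : Finset S := {u | Odd ((H.induce S).degree u)}
  set a' : S := ⟨a, hmem.2 .rfl⟩
  have haO : a' ∈ O := by simpa [O, hdegS] using ha
  have hO : #(O.erase a') = 1 := by
    have heven : Even #O := (H.induce S).even_card_odd_degree_vertices
    have := card_pos.2 ⟨_, haO⟩
    rw [card_erase_of_mem haO]
    obtain ⟨k, hk⟩ := heven
    omega
  obtain ⟨x, hx⟩ := card_eq_one.1 hO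
  have hxO : x ∈ O.erase a' := hx ▸ mem_singleton_self x
  refine ⟨x, fun h => (mem_erase.1 hxO).1 (Subtype.ext h), hmem.1 x.2, ?_, fun y hy hyodd => ?_⟩
  · simpa [O, hdegS] using (mem_erase.1 hxO).2
  · by_cases hya : y = a
    · exact .inl hya
    · have : ⟨y, hmem.2 hy⟩ ∈ O.erase a' := by
        simpa [O, a', hdegS, hya] using hyodd
      rw [hx, mem_singleton] at this
      exact .inr (congrArg Subtype.val this)

theorem SimpleGraph.degree_fromEdgeSet [Fintype W] [DecidableEq W] {D : Finset (Sym2 W)}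
    (hD : ∀ e ∈ D, ¬e.IsDiag) (v : W) :
    (fromEdgeSet (D : Set (Sym2 W))).degree v = #{e ∈ D | v ∈ e} := by
  rw [← card_incidenceFinset_eq_degree, incidenceFinset_eq_filter]
  congr 1
  ext e
  simp only [mem_filter, mem_edgeFinset, edgeSet_fromEdgeSet, Set.mem_sdiff, mem_coe,
    Sym2.mem_diagSet]
  exact ⟨fun ⟨⟨he, _⟩, hv⟩ => ⟨he, hv⟩, fun ⟨he, hv⟩ => ⟨⟨he, hD e he⟩, hv⟩⟩

theorem SimpleGraph.exists_disjoint_paths_of_not_reachable [DecidableEq W]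
    {G H : SimpleGraph W} (hHG : H ≤ G) {a b c d : W} (hac : H.Reachable a c)
    (hbd : H.Reachable b d) (hab : ¬H.Reachable a b) :
    ∃ (P : G.Walk a c) (Q : G.Walk b d), P.IsPath ∧ Q.IsPath ∧ WalkDisjoint P Q := by
  obtain ⟨p⟩ := hac
  obtain ⟨q⟩ := hbd
  refine ⟨p.bypass.mapLe hHG, q.bypass.mapLe hHG, p.bypass_isPath.mapLe hHG,
    q.bypass_isPath.mapLe hHG, fun z hzp hzq => hab ?_⟩
  rw [Walk.support_mapLe_eq_support] at hzp hzq
  exact (p.bypass.takeUntil z hzp).reachable.trans (q.bypass.takeUntil z hzq).reachable.symm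

def IsPerfectMatchingOn (G : SimpleGraph W) (A : Finset W) (M : Finset (Sym2 W)) : Prop :=
  IsMatchingOn G A M ∧ ∀ v ∈ A, ∃ e ∈ M, v ∈ e

namespace IsPerfectMatchingOn

variable {G : SimpleGraph W} {A A' A₁ A₂ : Finset W} {M M₁ M₂ : Finset (Sym2 W)}

theorem mem_iff (h : IsPerfectMatchingOn G A M) {v : W} : v ∈ A ↔ ∃ e ∈ M, v ∈ e :=
  ⟨h.2 v, fun ⟨e, he, hv⟩ => h.1.2.1 e he v hv⟩

theorem eq_of_mem (h : IsPerfectMatchingOn G A M) {e f : Sym2 W} {v : W} (he : e ∈ M)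
    (hf : f ∈ M) (hve : v ∈ e) (hvf : v ∈ f) : e = f :=
  by_contra fun hef => h.1.2.2 e he f hf hef v hve hvf

theorem unique (h : IsPerfectMatchingOn G A M) (h' : IsPerfectMatchingOn G A' M) : A = A' := by
  ext v
  rw [h.mem_iff, h'.mem_iff]

theorem card_filter_mem [DecidableEq W] (h : IsPerfectMatchingOn G A M) (v : W) :
    #{e ∈ M | v ∈ e} = if v ∈ A then 1 else 0 := by
  split_ifs with hv
  · obtain ⟨e, he, hve⟩ := h.2 v hv
    refine card_eq_one.2 ⟨e, eq_singleton_iff_unique_mem.2 ⟨mem_filter.2 ⟨he, hve⟩, ?_⟩⟩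
    exact fun f hf => h.eq_of_mem (mem_filter.1 hf).1 he (mem_filter.1 hf).2 hve
  · exact card_eq_zero.2 (filter_eq_empty_iff.2 fun e he hve => hv (h.mem_iff.2 ⟨e, he, hve⟩))

theorem glue [DecidableEq W] (h₁ : IsPerfectMatchingOn G A₁ M₁) (h₂ : IsPerfectMatchingOn G A₂ M₂)
    (P : W → Prop) [DecidablePred P] (hM₂ : ∀ e v, v ∈ e → P v → (e ∈ M ↔ e ∈ M₂))
    (hM₁ : ∀ e v, v ∈ e → ¬P v → (e ∈ M ↔ e ∈ M₁)) :
    IsPerfectMatchingOn G ({v ∈ A₁ | ¬P v} ∪ {v ∈ A₂ | P v}) M := by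
  refine ⟨⟨fun e he => ?_, fun e he v hv => ?_, fun e he f hf hef v hve hvf => ?_⟩, fun v hv => ?_⟩
  · by_cases hP : P e.out.1
    exacts [h₂.1.1 e ((hM₂ e _ e.out_fst_mem hP).1 he), h₁.1.1 e ((hM₁ e _ e.out_fst_mem hP).1 he)]
  · simp only [mem_union, mem_filter]
    by_cases hP : P v
    exacts [.inr ⟨h₂.1.2.1 e ((hM₂ e v hv hP).1 he) v hv, hP⟩,
      .inl ⟨h₁.1.2.1 e ((hM₁ e v hv hP).1 he) v hv, hP⟩]
  · by_cases hP : P v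
    · exact hef (h₂.eq_of_mem ((hM₂ e v hve hP).1 he) ((hM₂ f v hvf hP).1 hf) hve hvf)
    · exact hef (h₁.eq_of_mem ((hM₁ e v hve hP).1 he) ((hM₁ f v hvf hP).1 hf) hve hvf)
  · simp only [mem_union, mem_filter] at hv
    rcases hv with ⟨hv, hP⟩ | ⟨hv, hP⟩
    · obtain ⟨e, he, hve⟩ := h₁.2 v hv
      exact ⟨e, (hM₁ e v hve hP).2 he, hve⟩
    · obtain ⟨e, he, hve⟩ := h₂.2 v hv
      exact ⟨e, (hM₂ e v hve hP).2 he, hve⟩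

theorem not_isDiag_of_mem_symmDiff [DecidableEq W] (h₁ : IsPerfectMatchingOn G A₁ M₁)
    (h₂ : IsPerfectMatchingOn G A₂ M₂) {e : Sym2 W} (he : e ∈ M₁ ∆ M₂) : ¬e.IsDiag := by
  rcases mem_symmDiff.1 he with ⟨he, -⟩ | ⟨he, -⟩
  exacts [G.not_isDiag_of_mem_edgeSet (h₁.1.1 e he), G.not_isDiag_of_mem_edgeSet (h₂.1.1 e he)]

theorem degree_symmDiff_add [Fintype W] [DecidableEq W] (h₁ : IsPerfectMatchingOn G A₁ M₁)
    (h₂ : IsPerfectMatchingOn G A₂ M₂) (v : W) :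
    (fromEdgeSet (↑(M₁ ∆ M₂) : Set (Sym2 W))).degree v + 2 * #{e ∈ M₁ ∩ M₂ | v ∈ e} =
      (if v ∈ A₁ then 1 else 0) + if v ∈ A₂ then 1 else 0 := by
  have hsymm : {e ∈ M₁ ∆ M₂ | v ∈ e} = {e ∈ M₁ | v ∈ e} ∆ {e ∈ M₂ | v ∈ e} := by
    ext e
    simp only [mem_filter, mem_symmDiff]
    tauto
  rw [degree_fromEdgeSet (fun _ => h₁.not_isDiag_of_mem_symmDiff h₂) v, hsymm,
    filter_inter_distrib, card_symmDiff_add_two_mul_card_inter, h₁.card_filter_mem,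
    h₂.card_filter_mem]

theorem degree_symmDiff_le_two [Fintype W] [DecidableEq W] (h₁ : IsPerfectMatchingOn G A₁ M₁)
    (h₂ : IsPerfectMatchingOn G A₂ M₂) (v : W) :
    (fromEdgeSet (↑(M₁ ∆ M₂) : Set (Sym2 W))).degree v ≤ 2 := by
  have := h₁.degree_symmDiff_add h₂ v
  split_ifs at this <;> omega

theorem odd_degree_symmDiff_iff [Fintype W] [DecidableEq W] (h₁ : IsPerfectMatchingOn G A₁ M₁)
    (h₂ : IsPerfectMatchingOn G A₂ M₂) (v : W) :
    Odd ((fromEdgeSet (↑(M₁ ∆ M₂) : Set (Sym2 W))).degree v) ↔ v ∈ A₁ ∆ A₂ := by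
  have := h₁.degree_symmDiff_add h₂ v
  rw [Nat.odd_iff, mem_symmDiff]
  by_cases hv₁ : v ∈ A₁ <;> by_cases hv₂ : v ∈ A₂ <;> simp [hv₁, hv₂] at this ⊢ <;> omega

end IsPerfectMatchingOn

theorem Mf_empty [Fintype W] [DecidableEq W] (G : SimpleGraph W) (w : Sym2 W → R) (A : Finset W) :
    Mf G w ∅ A = ∑ M ∈ {M | IsPerfectMatchingOn G A M}, ∏ e ∈ M, w e := by
  simp only [Mf, IsPerfectMatchingOn, notMem_empty, not_false_eq_true, forall_const]
  congr

noncomputable def perfectMatchingPairs [Fintype W] (G : SimpleGraph W) (A B : Finset W) :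
    Finset (Finset (Sym2 W) × Finset (Sym2 W)) :=
  ({M | IsPerfectMatchingOn G A M} : Finset _) ×ˢ ({M | IsPerfectMatchingOn G B M} : Finset _)

section perfectMatchingPairs

variable [Fintype W] {G : SimpleGraph W} {A A' B B' : Finset W}
  {p : Finset (Sym2 W) × Finset (Sym2 W)}

theorem mem_perfectMatchingPairs :
    p ∈ perfectMatchingPairs G A B ↔ IsPerfectMatchingOn G A p.1 ∧ IsPerfectMatchingOn G B p.2 := by
  simp [perfectMatchingPairs]

theorem Mf_empty_mul_Mf_empty [DecidableEq W] (w : Sym2 W → R) :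
    Mf G w ∅ A * Mf G w ∅ B =
      ∑ p ∈ perfectMatchingPairs G A B, (∏ e ∈ p.1, w e) * ∏ e ∈ p.2, w e := by
  rw [Mf_empty, Mf_empty, sum_mul_sum, perfectMatchingPairs, sum_product]

theorem disjoint_perfectMatchingPairs {v : W} (hv : v ∈ A) (hv' : v ∉ A') :
    Disjoint (perfectMatchingPairs G A B) (perfectMatchingPairs G A' B') :=
  disjoint_left.2 fun _ hp hp' =>
    hv' ((mem_perfectMatchingPairs.1 hp).1.unique (mem_perfectMatchingPairs.1 hp').1 ▸ hv)

end perfectMatchingPairs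

noncomputable def componentEdges [DecidableEq W] (D : Finset (Sym2 W)) (a : W) : Finset (Sym2 W) :=
  {e ∈ D | ∀ v ∈ e, (fromEdgeSet (D : Set (Sym2 W))).Reachable a v}

theorem mem_componentEdges_of_reachable [DecidableEq W] {D : Finset (Sym2 W)} {a v : W}
    {e : Sym2 W} (he : e ∈ D) (hv : v ∈ e) (hav : (fromEdgeSet (D : Set (Sym2 W))).Reachable a v) :
    e ∈ componentEdges D a := by
  refine mem_filter.2 ⟨he, fun u hu => ?_⟩
  obtain rfl | hvu := eq_or_ne v u
  · exact hav
  obtain rfl := (Sym2.mem_and_mem_iff hvu).1 ⟨hv, hu⟩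
  exact hav.trans ((fromEdgeSet_adj _).2 ⟨he, hvu⟩).reachable

noncomputable def toggle [DecidableEq W] (a : W) (p : Finset (Sym2 W) × Finset (Sym2 W)) :
    Finset (Sym2 W) × Finset (Sym2 W) :=
  (p.1 ∆ componentEdges (p.1 ∆ p.2) a, p.2 ∆ componentEdges (p.1 ∆ p.2) a)

section toggle

variable [DecidableEq W] (a : W) (p : Finset (Sym2 W) × Finset (Sym2 W))

theorem toggle_toggle : toggle a (toggle a p) = p := by
  have hD : (toggle a p).1 ∆ (toggle a p).2 = p.1 ∆ p.2 := by
    rw [toggle, symmDiff_symmDiff_symmDiff_comm, symmDiff_self, symmDiff_bot]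
  rw [toggle, hD, toggle, symmDiff_symmDiff_cancel_right, symmDiff_symmDiff_cancel_right]

theorem prod_mul_prod_toggle {β : Type*} [CommMonoid β] (w : Sym2 W → β) :
    (∏ e ∈ (toggle a p).1, w e) * ∏ e ∈ (toggle a p).2, w e =
      (∏ e ∈ p.1, w e) * ∏ e ∈ p.2, w e :=
  prod_symmDiff_mul_prod_symmDiff (filter_subset _ _) w

variable {M₁ M₂ : Finset (Sym2 W)} {e : Sym2 W} {v : W}

theorem mem_symmDiff_componentEdges_of_reachable (hv : v ∈ e)
    (hav : (fromEdgeSet (↑(M₁ ∆ M₂) : Set (Sym2 W))).Reachable a v) :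
    e ∈ M₁ ∆ componentEdges (M₁ ∆ M₂) a ↔ e ∈ M₂ := by
  have : e ∈ componentEdges (M₁ ∆ M₂) a ↔ e ∈ M₁ ∆ M₂ :=
    ⟨fun he => filter_subset _ _ he, fun he => mem_componentEdges_of_reachable he hv hav⟩
  simp only [mem_symmDiff, this]
  tauto

theorem mem_symmDiff_componentEdges_of_not_reachable (hv : v ∈ e)
    (hav : ¬(fromEdgeSet (↑(M₁ ∆ M₂) : Set (Sym2 W))).Reachable a v) :
    e ∈ M₁ ∆ componentEdges (M₁ ∆ M₂) a ↔ e ∈ M₁ := by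
  have : e ∉ componentEdges (M₁ ∆ M₂) a := fun he => hav ((mem_filter.1 he).2 v hv)
  simp only [mem_symmDiff, this]
  tauto

end toggle

theorem IsPerfectMatchingOn.symmDiff_componentEdges [Fintype W] [DecidableEq W]
    {G : SimpleGraph W} {A₁ A₂ S : Finset W} {M₁ M₂ : Finset (Sym2 W)} {a : W}
    (h₁ : IsPerfectMatchingOn G A₁ M₁) (h₂ : IsPerfectMatchingOn G A₂ M₂) (hS : S ⊆ A₁ ∆ A₂)
    (hreach : ∀ v ∈ A₁ ∆ A₂, (fromEdgeSet (↑(M₁ ∆ M₂) : Set (Sym2 W))).Reachable a v ↔ v ∈ S) :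
    IsPerfectMatchingOn G (A₁ ∆ S) (M₁ ∆ componentEdges (M₁ ∆ M₂) a) := by
  have hA : {v ∈ A₁ | ¬(fromEdgeSet (↑(M₁ ∆ M₂) : Set (Sym2 W))).Reachable a v} ∪
      {v ∈ A₂ | (fromEdgeSet (↑(M₁ ∆ M₂) : Set (Sym2 W))).Reachable a v} = A₁ ∆ S := by
    ext v
    have := hreach v
    have := @hS v
    simp only [mem_union, mem_filter, mem_symmDiff] at *
    tauto
  rw [← hA]
  exact h₁.glue h₂ _ (fun e v hv => mem_symmDiff_componentEdges_of_reachable a hv)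
    (fun e v hv => mem_symmDiff_componentEdges_of_not_reachable a hv)

theorem toggle_mem_perfectMatchingPairs [Fintype W] [DecidableEq W] {G : SimpleGraph W}
    {A₁ A₂ S : Finset W} {a : W} {p : Finset (Sym2 W) × Finset (Sym2 W)}
    (hp : p ∈ perfectMatchingPairs G A₁ A₂) (hS : S ⊆ A₁ ∆ A₂)
    (hreach : ∀ v ∈ A₁ ∆ A₂, (fromEdgeSet (↑(p.1 ∆ p.2) : Set (Sym2 W))).Reachable a v ↔ v ∈ S) :
    toggle a p ∈ perfectMatchingPairs G (A₁ ∆ S) (A₂ ∆ S) := by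
  obtain ⟨h₁, h₂⟩ := mem_perfectMatchingPairs.1 hp
  have h₂' := h₂.symmDiff_componentEdges h₁ (symmDiff_comm A₁ A₂ ▸ hS)
    (by rwa [symmDiff_comm A₂, symmDiff_comm p.2])
  rw [symmDiff_comm p.2 p.1] at h₂'
  exact mem_perfectMatchingPairs.2 ⟨h₁.symmDiff_componentEdges h₂ hS hreach, h₂'⟩

theorem IsPerfectMatchingOn.fromEdgeSet_symmDiff_le [DecidableEq W] {G : SimpleGraph W}
    {A₁ A₂ : Finset W} {M₁ M₂ : Finset (Sym2 W)} (h₁ : IsPerfectMatchingOn G A₁ M₁)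
    (h₂ : IsPerfectMatchingOn G A₂ M₂) : fromEdgeSet (↑(M₁ ∆ M₂) : Set (Sym2 W)) ≤ G := by
  intro x y hxy
  rcases mem_symmDiff.1 ((fromEdgeSet_adj _).1 hxy).1 with ⟨he, -⟩ | ⟨he, -⟩
  exacts [h₁.1.1 _ he, h₂.1.1 _ he]

namespace FaceConfig

variable {G : SimpleGraph W} {L : List W} {a b c d : W}

theorem pairwise_ne (hface : FaceConfig G L a b c d) :
    a ≠ b ∧ a ≠ c ∧ a ≠ d ∧ b ≠ c ∧ b ≠ d ∧ c ≠ d := by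
  obtain ⟨L', hrot, i, j, k, l, hij, hjk, hkl, rfl, rfl, rfl, rfl⟩ := hface.cyclic
  have hne : ∀ {m n : Fin L'.length}, m < n → L'.get m ≠ L'.get n := fun h heq =>
    h.ne ((hrot.nodup_iff.1 hface.nodup).get_inj_iff.1 heq)
  exact ⟨hne hij, hne (hij.trans hjk), hne (hij.trans (hjk.trans hkl)), hne hjk,
    hne (hjk.trans hkl), hne hkl⟩

theorem not_exists_disjoint_paths (hface : FaceConfig G L a b c d) :
    ¬∃ (P : G.Walk a c) (Q : G.Walk b d), P.IsPath ∧ Q.IsPath ∧ WalkDisjoint P Q := by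
  obtain ⟨L', hrot, i, j, k, l, hij, hjk, hkl, rfl, rfl, rfl, rfl⟩ := hface.cyclic
  exact hface.noncrossing L' hrot i j k l hij hjk hkl

/-- The alternating path starting at `a` ends at `b` or at `d`: if it ended at `c`, the path
starting at `b` would end at `d`, and the two would be disjoint paths joining the interleaved
pairs `a, c` and `b, d`. -/
theorem exists_reachable_iff_mem_pair [Fintype W] [DecidableEq W]
    (hface : FaceConfig G L a b c d) {A₁ A₂ : Finset W} {M₁ M₂ : Finset (Sym2 W)}
    (h₁ : IsPerfectMatchingOn G A₁ M₁) (h₂ : IsPerfectMatchingOn G A₂ M₂)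
    (hA : A₁ ∆ A₂ = {a, b, c, d}) :
    ∃ x ∈ ({b, d} : Finset W), ∀ v ∈ A₁ ∆ A₂,
      (fromEdgeSet (↑(M₁ ∆ M₂) : Set (Sym2 W))).Reachable a v ↔ v ∈ ({a, x} : Finset W) := by
  obtain ⟨hab, hac, had, hbc, hbd, hcd⟩ := hface.pairwise_ne
  set H := fromEdgeSet (↑(M₁ ∆ M₂) : Set (Sym2 W))
  have hodd : ∀ v, Odd (H.degree v) ↔ v = a ∨ v = b ∨ v = c ∨ v = d := fun v => by
    rw [h₁.odd_degree_symmDiff_iff h₂, hA]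
    simp
  have hdeg := h₁.degree_symmDiff_le_two h₂
  obtain ⟨x, hxa, hax, hx, hpath⟩ :=
    exists_other_odd_degree_reachable hdeg ((hodd a).2 (.inl rfl))
  have hxc : x ≠ c := by
    rintro rfl
    have hab' : ¬H.Reachable a b := fun h => by
      rcases hpath b h ((hodd b).2 (by simp)) with h | h
      exacts [hab h.symm, hbc h]
    obtain ⟨y, hyb, hby, hy, -⟩ := exists_other_odd_degree_reachable hdeg ((hodd b).2 (by simp))
    obtain rfl : y = d := by
      rcases (hodd y).1 hy with rfl | rfl | rfl | rfl
      exacts [absurd hby.symm hab', absurd rfl hyb, absurd (hax.trans hby.symm) hab', rfl]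
    exact hface.not_exists_disjoint_paths
      (exists_disjoint_paths_of_not_reachable (h₁.fromEdgeSet_symmDiff_le h₂) hax hby hab')
  refine ⟨x, ?_, fun v hv => ⟨fun h => ?_, fun h => ?_⟩⟩
  · have := (hodd x).1 hx
    simp only [mem_insert, mem_singleton]
    tauto
  · simpa using hpath v h ((hodd v).2 (by simpa [hA] using hv))
  · rcases mem_insert.1 h with rfl | h
    exacts [.rfl, mem_singleton.1 h ▸ hax]

theorem toggle_mem [Fintype W] [DecidableEq W] (hface : FaceConfig G L a b c d)
    {A₁ A₂ : Finset W} {p : Finset (Sym2 W) × Finset (Sym2 W)}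
    (hp : p ∈ perfectMatchingPairs G A₁ A₂) (hA : A₁ ∆ A₂ = {a, b, c, d}) :
    toggle a p ∈ perfectMatchingPairs G (A₁ ∆ {a, b}) (A₂ ∆ {a, b}) ∪
      perfectMatchingPairs G (A₁ ∆ {a, d}) (A₂ ∆ {a, d}) := by
  obtain ⟨h₁, h₂⟩ := mem_perfectMatchingPairs.1 hp
  obtain ⟨x, hx, hreach⟩ := hface.exists_reachable_iff_mem_pair h₁ h₂ hA
  rcases mem_insert.1 hx with rfl | hx
  · exact mem_union_left _
      (toggle_mem_perfectMatchingPairs hp (by simp [hA, insert_subset_iff]) hreach)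
  · obtain rfl := mem_singleton.1 hx
    exact mem_union_right _
      (toggle_mem_perfectMatchingPairs hp (by simp [hA, insert_subset_iff]) hreach)

theorem toggle_mem_rhs [Fintype W] [DecidableEq W] (hface : FaceConfig G L a b c d)
    {p : Finset (Sym2 W) × Finset (Sym2 W)}
    (hp : p ∈ perfectMatchingPairs G (univ \ {b}) (univ \ {a, c, d}) ∪
      perfectMatchingPairs G (univ \ {d}) (univ \ {a, b, c})) :
    toggle a p ∈ perfectMatchingPairs G (univ \ {a}) (univ \ {b, c, d}) ∪
      perfectMatchingPairs G (univ \ {a, b, d}) (univ \ {c}) := by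
  obtain ⟨hab, hac, had, hbc, hbd, hcd⟩ := hface.pairwise_ne
  rcases mem_union.1 hp with hp | hp
  on_goal 2 => rw [union_comm]
  all_goals
    convert hface.toggle_mem hp ?_ using 3
    all_goals
      ext v
      simp only [mem_symmDiff, mem_sdiff, mem_univ, mem_insert, mem_singleton, true_and]
      grind

theorem toggle_mem_lhs [Fintype W] [DecidableEq W] (hface : FaceConfig G L a b c d)
    {p : Finset (Sym2 W) × Finset (Sym2 W)}
    (hp : p ∈ perfectMatchingPairs G (univ \ {a}) (univ \ {b, c, d}) ∪
      perfectMatchingPairs G (univ \ {a, b, d}) (univ \ {c})) :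
    toggle a p ∈ perfectMatchingPairs G (univ \ {b}) (univ \ {a, c, d}) ∪
      perfectMatchingPairs G (univ \ {d}) (univ \ {a, b, c}) := by
  obtain ⟨hab, hac, had, hbc, hbd, hcd⟩ := hface.pairwise_ne
  rcases mem_union.1 hp with hp | hp
  on_goal 2 => rw [union_comm]
  all_goals
    convert hface.toggle_mem hp ?_ using 3
    all_goals
      ext v
      simp only [mem_symmDiff, mem_sdiff, mem_univ, mem_insert, mem_singleton, true_and]
      grind

end FaceConfig

/-- The `S = ∅` specialization of the second four-term free-boundary identity: a
(non-bipartite) counterpart of Kuo's condensation theorem for *perfect* matchings.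
Here `Mf G w ∅ A` is the total weight of perfect matchings of the induced subgraph on
`A`, i.e. `M(G ∖ (univ \ A))`. -/
theorem kuo_condensation_perfect_odd
    (G : SimpleGraph V) (w : Sym2 V → R) (L : List V) (a b c d : V)
    (hface : FaceConfig G L a b c d) :
    Mf G w ∅ (Finset.univ \ {b}) * Mf G w ∅ (Finset.univ \ {a, c, d}) +
      Mf G w ∅ (Finset.univ \ {d}) * Mf G w ∅ (Finset.univ \ {a, b, c}) =
    Mf G w ∅ (Finset.univ \ {a}) * Mf G w ∅ (Finset.univ \ {b, c, d}) +
      Mf G w ∅ (Finset.univ \ {a, b, d}) * Mf G w ∅ (Finset.univ \ {c}) := by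
  obtain ⟨hab, -, -, -, hbd, -⟩ := hface.pairwise_ne
  simp only [Mf_empty_mul_Mf_empty]
  rw [← sum_union (disjoint_perfectMatchingPairs (v := d) (by simp [hbd.symm]) (by simp)),
    ← sum_union (disjoint_perfectMatchingPairs (v := b) (by simp [hab.symm]) (by simp))]
  exact sum_nbij' (toggle a) (toggle a) (fun p hp => hface.toggle_mem_rhs hp)
    (fun p hp => hface.toggle_mem_lhs hp) (fun p _ => toggle_toggle a p)
    (fun p _ => toggle_toggle a p) (fun p _ => (prod_mul_prod_toggle a p w).symm)
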